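/- Let M→N be a matroid perspective on a finite linearly ordered ground set E. Let B ⊆ E be independent in M, let P ⊆ Int_N(B), and let Q ⊆ Ext_M(B). Then every element of Q lies in the closure of B∖P in M; consequently (B∖P) ∪ Q is contained in the closure of B∖P in M. -/

import Mathlib

/-- A circuit of a matroid: a minimal dependent set. -/
def Matroid.IsCircuit' {α : Type*} (M : Matroid α) (C : Set α) : Prop :=
  M.Dep C ∧ ∀ D, M.Dep D → D ⊆ C → D = C

/-- A cocircuit of a matroid: a circuit of the dual matroid. -/
def Matroid.IsCocircuit' {α : Type*} (M : Matroid α) (C : Set α) : Prop :=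
  M✶.IsCircuit' C

/-- The rank of a set in a matroid: the largest cardinality of an independent subset. -/
noncomputable def Matroid.rk' {α : Type*} (M : Matroid α) (A : Set α) : ℕ :=
  sSup {n : ℕ | ∃ I, I ⊆ A ∧ M.Indep I ∧ I.ncard = n}

/-- `e` is the minimum element of the set `C`. -/
def IsMinOf {α : Type*} [LinearOrder α] (C : Set α) (e : α) : Prop :=
  e ∈ C ∧ ∀ x ∈ C, e ≤ x

/-- `Int_M(A)`: internally active elements of `A` w.r.t. `M`
(the ground set is the whole type, so `E ∖ A = Aᶜ`). -/
def IntSet {α : Type*} [LinearOrder α] (M : Matroid α) (A : Set α) : Set α :=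
  {e | e ∈ A ∧ ∃ C, M.IsCocircuit' C ∧ C ⊆ Aᶜ ∪ {e} ∧ IsMinOf C e}

/-- `Ext_M(A)`: externally active elements w.r.t. `M`. -/
def ExtSet {α : Type*} [LinearOrder α] (M : Matroid α) (A : Set α) : Set α :=
  {e | e ∉ A ∧ ∃ C, M.IsCircuit' C ∧ C ⊆ A ∪ {e} ∧ IsMinOf C e}

/-- `P_M(A)`: smallest elements of cocircuits of `M` contained in `E ∖ A`. -/
def PActSet {α : Type*} [LinearOrder α] (M : Matroid α) (A : Set α) : Set α :=
  {e | e ∉ A ∧ ∃ C, M.IsCocircuit' C ∧ C ⊆ Aᶜ ∧ IsMinOf C e}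

/-- `Q_M(A)`: smallest elements of circuits of `M` contained in `A`. -/
def QActSet {α : Type*} [LinearOrder α] (M : Matroid α) (A : Set α) : Set α :=
  {e | e ∈ A ∧ ∃ C, M.IsCircuit' C ∧ C ⊆ A ∧ IsMinOf C e}

/-!
Let `q ∈ Ext_M(B)` with its circuit `C ⊆ B ∪ {q}`, `q = min C`. Then `q ∈ cl_M(C ∖ {q})`, so it
suffices that `C` avoids `P`. If `p ∈ C ∩ P`, with cocircuit `K ⊆ (E ∖ B) ∪ {p}` of `N`,
`p = min K`, the two minimality conditions force `C ∩ K = {p}`. But the complement of a cocircuit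
of `N` is a flat of `N`, hence of `M`, and a flat missing `p` cannot contain `C ∖ {p}`.
-/

open Set

namespace Matroid

variable {α : Type*} {M N : Matroid α} {C K : Set α} {e : α}

lemma isCircuit'_iff : M.IsCircuit' C ↔ M.IsCircuit C := by
  rw [isCircuit_iff]
  rfl

lemma isCocircuit'_iff : M.IsCocircuit' K ↔ M.IsCocircuit K :=
  isCircuit'_iff

lemma IsCocircuit.isFlat_ground_sdiff (hK : M.IsCocircuit K) : M.IsFlat (M.E \ K) := by
  refine isFlat_iff_closure_eq.2 (subset_antisymm (fun e he ↦ ?_) (M.subset_closure _))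
  by_contra heK
  have heK' : e ∈ K := by
    simpa [M.closure_subset_ground _ he] using heK
  obtain ⟨C, hCss, hC, heC⟩ := M.exists_isCircuit_of_mem_closure he heK
  refine hC.inter_isCocircuit_ne_singleton hK (e := e) (subset_antisymm ?_ (by simp [heC, heK']))
  rintro x ⟨hxC, hxK⟩
  obtain rfl | hx := hCss hxC
  · rfl
  · exact absurd hxK hx.2

/-- Circuit–cocircuit orthogonality across a perspective `M → N`. -/
lemma IsCircuit.inter_isCocircuit_ne_singleton_of_isFlat_imp
    (hMN : ∀ F, N.IsFlat F → M.IsFlat F) (hE : M.E ⊆ N.E)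
    (hC : M.IsCircuit C) (hK : N.IsCocircuit K) : C ∩ K ≠ {e} := by
  intro hCK
  have heK : e ∈ K := (hCK.symm.subset rfl).2
  have hCe : C \ {e} ⊆ N.E \ K := by
    rintro x ⟨hxC, hxe⟩
    exact ⟨hE (hC.subset_ground hxC), fun hxK ↦ hxe (hCK.subset ⟨hxC, hxK⟩)⟩
  have hcl := M.closure_subset_closure hCe
    (hC.mem_closure_sdiff_singleton_of_mem (hCK.symm.subset rfl).1)
  rw [(hMN _ hK.isFlat_ground_sdiff).closure] at hcl
  exact hcl.2 heK

end Matroid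

lemma inter_eq_singleton_of_isMinOf {α : Type*} [LinearOrder α] {B C K : Set α} {p q : α}
    (hpB : p ∈ B) (hqB : q ∉ B) (hCB : C ⊆ B ∪ {q}) (hqC : IsMinOf C q)
    (hKB : K ⊆ Bᶜ ∪ {p}) (hpK : IsMinOf K p) (hpC : p ∈ C) : C ∩ K = {p} := by
  refine subset_antisymm (fun x ⟨hxC, hxK⟩ ↦ ?_) (singleton_subset_iff.2 ⟨hpC, hpK.1⟩)
  obtain hxB | rfl := hCB hxC
  · exact (hKB hxK).resolve_left (not_not.2 hxB)
  · have hpx : p = x := le_antisymm (hpK.2 x hxK) (hqC.2 p hpC)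
    exact absurd (hpx ▸ hpB) hqB

lemma extSet_subset_closure_sdiff {α : Type*} [LinearOrder α] {M N : Matroid α}
    (hMN : ∀ F, N.IsFlat F → M.IsFlat F) (hE : M.E ⊆ N.E) {B P : Set α}
    (hP : P ⊆ IntSet N B) : ExtSet M B ⊆ M.closure (B \ P) := by
  rintro q ⟨hqB, C, hC, hCB, hqC⟩
  rw [Matroid.isCircuit'_iff] at hC
  refine M.closure_subset_closure ?_ (hC.mem_closure_sdiff_singleton_of_mem hqC.1)
  rintro x ⟨hxC, hxq⟩
  have hxB : x ∈ B := (hCB hxC).resolve_right hxq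
  refine ⟨hxB, fun hxP ↦ ?_⟩
  obtain ⟨-, K, hK, hKB, hxK⟩ := hP hxP
  exact hC.inter_isCocircuit_ne_singleton_of_isFlat_imp hMN hE (Matroid.isCocircuit'_iff.1 hK)
    (inter_eq_singleton_of_isMinOf hxB hqB hCB hqC hKB hxK hxC)

theorem stmt8_general {α : Type*} [LinearOrder α] (M N : Matroid α)
    (hNE : N.E = Set.univ)
    (hMN : ∀ F, N.IsFlat F → M.IsFlat F)
    (B : Set α) (hBi : M.Indep B)
    (P : Set α) (hP : P ⊆ IntSet N B) (Q : Set α) (hQ : Q ⊆ ExtSet M B) :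
    Q ⊆ M.closure (B \ P) ∧ (B \ P) ∪ Q ⊆ M.closure (B \ P) := by
  have hQcl : Q ⊆ M.closure (B \ P) :=
    hQ.trans (extSet_subset_closure_sdiff hMN (hNE ▸ subset_univ _) hP)
  exact ⟨hQcl, union_subset (M.subset_closure _ (sdiff_subset.trans hBi.subset_ground)) hQcl⟩

/-- For a matroid perspective `M → N`, `B` independent in `M`, `P ⊆ Int_N(B)`, and
`Q ⊆ Ext_M(B)`: every element of `Q` lies in the closure of `B ∖ P` in `M`, hence
`(B ∖ P) ∪ Q` is contained in that closure. -/
theorem stmt8 {α : Type*} [Fintype α] [LinearOrder α] (M N : Matroid α)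
    (hME : M.E = Set.univ) (hNE : N.E = Set.univ)
    (hMN : ∀ F, N.IsFlat F → M.IsFlat F)
    (B : Set α) (hBi : M.Indep B)
    (P : Set α) (hP : P ⊆ IntSet N B) (Q : Set α) (hQ : Q ⊆ ExtSet M B) :
    Q ⊆ M.closure (B \ P) ∧ (B \ P) ∪ Q ⊆ M.closure (B \ P) :=
  stmt8_general M N hNE hMN B hBi P hP Q hQ
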